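/- For every λ ∈ [0,2] there exists a constant C > 0, depending only on λ, such that for every ε ∈ (0,1], every σ ∈ ℝ and every k ∈ ℤ³ one has |Q₀(σ,k) − Q₀^ε(σ,k)| ≤ C·ε^{λ/2}·(1 + |σ|^{1/2} + |k|)^{−2+λ}, where Q₀ := Q₀⁰. -/

import Mathlib

open Real

noncomputable section

/-- The lattice `ℤ³`. -/
abbrev Z3 := Fin 3 → ℤ

/-- Euclidean norm `|k|` of `k ∈ ℤ³`. -/
def knorm (k : Z3) : ℝ := Real.sqrt (∑ i, ((k i : ℝ)) ^ 2)

/-- `α_ε(k) = 4π²|k|² + 16π⁴ε|k|⁴ + 1`. -/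
def alphaE (ε : ℝ) (k : Z3) : ℝ :=
  4 * π ^ 2 * (knorm k) ^ 2 + 16 * π ^ 4 * ε * (knorm k) ^ 4 + 1

/-- `Q₀^ε(σ,k) = 1/(−2πiσ + α_ε(k))`. -/
def Q0e (ε : ℝ) (μ : ℝ × Z3) : ℂ :=
  1 / (-2 * (π : ℂ) * Complex.I * (μ.1 : ℂ) + (alphaE ε μ.2 : ℂ))

lemma knorm_nonneg (k : Z3) : 0 ≤ knorm k := Real.sqrt_nonneg _

lemma interp {a b c θ : ℝ} (ha : 0 ≤ a) (hb : 0 ≤ b) (hc : 0 ≤ c)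
    (hθ0 : 0 ≤ θ) (hθ1 : θ ≤ 1) (hab : a ≤ b) (hac : a ≤ c) :
    a ≤ b ^ (1 - θ) * c ^ θ := by
  rcases eq_or_lt_of_le ha with h | h
  · rw [← h]
    exact mul_nonneg (Real.rpow_nonneg hb _) (Real.rpow_nonneg hc _)
  · have h1 : a = a ^ (1 - θ) * a ^ θ := by
      rw [← Real.rpow_add h, sub_add_cancel, Real.rpow_one]
    rw [h1]
    exact mul_le_mul (Real.rpow_le_rpow ha hab (by linarith))
      (Real.rpow_le_rpow ha hac hθ0) (Real.rpow_nonneg ha _) (Real.rpow_nonneg hb _)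

lemma abs_D_ge_alpha (e σ : ℝ) (k : Z3) :
    alphaE e k ≤ ‖-2 * (π : ℂ) * Complex.I * (σ : ℂ) + ((alphaE e k : ℝ) : ℂ)‖ := by
  have h := Complex.abs_re_le_norm (-2 * (π : ℂ) * Complex.I * (σ : ℂ) + ((alphaE e k : ℝ) : ℂ))
  have hre : (-2 * (π : ℂ) * Complex.I * (σ : ℂ) + ((alphaE e k : ℝ) : ℂ)).re = alphaE e k := by
    simp
  rw [hre] at h
  exact le_trans (le_abs_self _) h

lemma abs_D_ge_sigma (e σ : ℝ) (k : Z3) :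
    2 * π * |σ| ≤ ‖-2 * (π : ℂ) * Complex.I * (σ : ℂ) + ((alphaE e k : ℝ) : ℂ)‖ := by
  have h := Complex.abs_im_le_norm (-2 * (π : ℂ) * Complex.I * (σ : ℂ) + ((alphaE e k : ℝ) : ℂ))
  have him : (-2 * (π : ℂ) * Complex.I * (σ : ℂ) + ((alphaE e k : ℝ) : ℂ)).im = -(2 * π * σ) := by
    simp
  rw [him, abs_neg, abs_mul] at h
  have hπ : (0:ℝ) ≤ 2 * π := by positivity
  rw [abs_of_nonneg hπ] at h
  exact h

set_option maxHeartbeats 1000000 in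
/-- Interpolated difference bound:
`|Q₀(σ,k) − Q₀^ε(σ,k)| ≤ C·ε^{λ/2}·(1+|σ|^{1/2}+|k|)^{−2+λ}` for `λ ∈ [0,2]`, `ε ∈ (0,1]`. -/
theorem Q0e_difference_bound (lam : ℝ) (hlam0 : 0 ≤ lam) (hlam2 : lam ≤ 2) :
    ∃ C > 0, ∀ ε ∈ Set.Ioc (0 : ℝ) 1, ∀ σ : ℝ, ∀ k : Z3,
      ‖Q0e 0 (σ, k) - Q0e ε (σ, k)‖ ≤
        C * ε ^ (lam / 2) * (1 + Real.sqrt |σ| + knorm k) ^ (-2 + lam) := by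
  refine ⟨6, by norm_num, ?_⟩
  rintro ε ⟨hε0, hε1⟩ σ k
  have hπ : (3.14 : ℝ) < π := by
    have := Real.pi_gt_d6; linarith
  have hπ0 : (0:ℝ) < π := by linarith
  set n := knorm k with hn_def
  have hn : 0 ≤ n := knorm_nonneg k
  set s := Real.sqrt |σ| with hs_def
  have hs : 0 ≤ s := Real.sqrt_nonneg _
  have hs2 : s ^ 2 = |σ| := Real.sq_sqrt (abs_nonneg σ)
  have hσ : 0 ≤ |σ| := abs_nonneg σ
  set X := 1 + s + n with hX_def
  have hX1 : (1 : ℝ) ≤ X := by rw [hX_def]; linarith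
  have hXpos : (0 : ℝ) < X := by linarith
  have ha0 : alphaE 0 k = 4 * π ^ 2 * n ^ 2 + 1 := by
    simp [alphaE, ← hn_def]
  have haE : alphaE ε k = 4 * π ^ 2 * n ^ 2 + 16 * π ^ 4 * ε * n ^ 4 + 1 := rfl
  set D0 : ℂ := -2 * (π : ℂ) * Complex.I * (σ : ℂ) + ((alphaE 0 k : ℝ) : ℂ) with hD0_def
  set DE : ℂ := -2 * (π : ℂ) * Complex.I * (σ : ℂ) + ((alphaE ε k : ℝ) : ℂ) with hDE_def
  have hA0pos : 0 < alphaE 0 k := by rw [ha0]; positivity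
  have hAEpos : 0 < alphaE ε k := by rw [haE]; positivity
  have habs0 : alphaE 0 k ≤ ‖D0‖ := abs_D_ge_alpha 0 σ k
  have habsE : alphaE ε k ≤ ‖DE‖ := abs_D_ge_alpha ε σ k
  have habs0σ : 2 * π * |σ| ≤ ‖D0‖ := abs_D_ge_sigma 0 σ k
  have habs0pos : 0 < ‖D0‖ := lt_of_lt_of_le hA0pos habs0
  have habsEpos : 0 < ‖DE‖ := lt_of_lt_of_le hAEpos habsE
  have hD0ne : D0 ≠ 0 := by
    intro h; rw [h] at habs0pos; simp at habs0pos
  have hDEne : DE ≠ 0 := by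
    intro h; rw [h] at habsEpos; simp at habsEpos
  have e0 : Q0e 0 (σ, k) = 1 / D0 := rfl
  have eE : Q0e ε (σ, k) = 1 / DE := rfl
  have hdiff : Q0e 0 (σ, k) - Q0e ε (σ, k) = (DE - D0) / (D0 * DE) := by
    rw [e0, eE, one_div, one_div, inv_sub_inv hD0ne hDEne]
  have hDEsub : DE - D0 = ((16 * π ^ 4 * ε * n ^ 4 : ℝ) : ℂ) := by
    rw [hDE_def, hD0_def]
    push_cast [ha0, haE]
    ring
  have habsdiff : ‖Q0e 0 (σ, k) - Q0e ε (σ, k)‖ =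
      (16 * π ^ 4 * ε * n ^ 4) / (‖D0‖ * ‖DE‖) := by
    rw [hdiff, norm_div, norm_mul, hDEsub, Complex.norm_real, Real.norm_eq_abs, abs_of_nonneg (by positivity)]
  set a := ‖Q0e 0 (σ, k) - Q0e ε (σ, k)‖ with ha_def
  have ha_nonneg : 0 ≤ a := norm_nonneg _
  clear_value a n s X D0 DE
  have hA2 : 0 ≤ 4 * π ^ 2 * n ^ 2 := by positivity
  have hB : 0 ≤ 16 * π ^ 4 * ε * n ^ 4 := by positivity
  -- bound (b): a ≤ ε
  have hb : a ≤ ε := by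
    rw [habsdiff, div_le_iff₀ (by positivity)]
    have h1 : 16 * π ^ 4 * n ^ 4 ≤ alphaE 0 k * alphaE ε k := by
      rw [ha0, haE]; nlinarith [mul_nonneg hA2 hB]
    calc 16 * π ^ 4 * ε * n ^ 4 = ε * (16 * π ^ 4 * n ^ 4) := by ring
      _ ≤ ε * (alphaE 0 k * alphaE ε k) := mul_le_mul_of_nonneg_left h1 hε0.le
      _ ≤ ε * (‖D0‖ * ‖DE‖) := by
          exact mul_le_mul_of_nonneg_left
            (mul_le_mul habs0 habsE hAEpos.le habs0pos.le) hε0.le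
  -- bound (a): a ≤ 6 / X^2
  have hX2 : X ^ 2 ≤ 6 * ‖D0‖ := by
    have h1 : X ^ 2 ≤ 3 * (1 + |σ| + n ^ 2) := by
      rw [hX_def, ← hs2]
      nlinarith [sq_nonneg (s - 1), sq_nonneg (n - 1), sq_nonneg (s - n)]
    have h2 : 1 + |σ| + n ^ 2 ≤ alphaE 0 k + 2 * π * |σ| := by
      rw [ha0]
      nlinarith [mul_nonneg hσ (by linarith : (0:ℝ) ≤ 2 * π - 1),
        mul_nonneg (sq_nonneg n) (by nlinarith : (0:ℝ) ≤ 4 * π ^ 2 - 1)]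
    linarith
  have hA : a ≤ 6 / X ^ 2 := by
    have step1 : a ≤ 1 / ‖D0‖ := by
      rw [habsdiff, div_le_div_iff₀ (by positivity) habs0pos]
      have hle : 16 * π ^ 4 * ε * n ^ 4 ≤ alphaE ε k := by
        rw [haE]; linarith
      calc (16 * π ^ 4 * ε * n ^ 4) * ‖D0‖
          ≤ ‖DE‖ * ‖D0‖ :=
            mul_le_mul_of_nonneg_right (le_trans hle habsE) habs0pos.le
        _ = 1 * (‖D0‖ * ‖DE‖) := by ring
    have step2 : 1 / ‖D0‖ ≤ 6 / X ^ 2 := by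
      rw [div_le_div_iff₀ habs0pos (pow_pos hXpos 2)]
      linarith
    linarith
  -- interpolation
  have hkey := interp ha_nonneg
    (le_of_lt (div_pos (by norm_num) (pow_pos hXpos 2))) hε0.le
    (by linarith : 0 ≤ lam / 2) (by linarith : lam / 2 ≤ 1) hA hb
  refine le_trans hkey ?_
  have hXr : ((6:ℝ) / X ^ 2) ^ (1 - lam / 2) = 6 ^ (1 - lam / 2) * X ^ (-2 + lam) := by
    rw [Real.div_rpow (by norm_num) (sq_nonneg X), ← Real.rpow_natCast X 2,
      ← Real.rpow_mul hXpos.le, div_eq_mul_inv, ← Real.rpow_neg hXpos.le]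
    congr 1
    push_cast
    ring
  have h6 : (6:ℝ) ^ (1 - lam / 2) ≤ 6 := by
    calc (6:ℝ) ^ (1 - lam / 2) ≤ (6:ℝ) ^ (1:ℝ) :=
          Real.rpow_le_rpow_of_exponent_le (by norm_num) (by linarith)
      _ = 6 := Real.rpow_one 6
  rw [hXr]
  calc 6 ^ (1 - lam / 2) * X ^ (-2 + lam) * ε ^ (lam / 2)
      = 6 ^ (1 - lam / 2) * (X ^ (-2 + lam) * ε ^ (lam / 2)) := by ring
    _ ≤ 6 * (X ^ (-2 + lam) * ε ^ (lam / 2)) :=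
        mul_le_mul_of_nonneg_right h6
          (mul_nonneg (Real.rpow_nonneg hXpos.le _) (Real.rpow_nonneg hε0.le _))
    _ = 6 * ε ^ (lam / 2) * X ^ (-2 + lam) := by ring
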